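/- arXiv:1612.08154 — 2 statements merged into one kernel-verified Lean document; each statement's English description precedes it below -/
import Mathlib

section
/- Let Q be a complete deterministic automaton, and let (x,y) be the normalization of some pair (u,v) ∈ Σ* × Σ⁺ with respect to Q. Then for every i ≥ 0, j ≥ 1 and every factorization y = y'·y'', the pair (x·y^i·y', (y''·y')^j) is the normalization of itself with respect to Q. -/
open Classical

/-- `wpow v n` is the word `v` repeated `n` times. -/
def wpow {α : Type} (v : List α) : ℕ → List α
  | 0 => []
  | n + 1 => wpow v n ++ v

/-- The ultimately periodic infinite word `u·v^ω` (meaningful when `v ≠ []`). -/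
def upWord {α : Type} [Inhabited α] (u v : List α) : ℕ → α := fun n =>
  if n < u.length then u.getD n default
  else v.getD ((n - u.length) % v.length) default

/-- `l` is a prefix of the infinite word `w`. -/
def prefOf {α : Type} [Inhabited α] (l : List α) (w : ℕ → α) : Prop :=
  ∀ i < l.length, w i = l.getD i default

/-- A complete deterministic automaton (no acceptance condition). -/
structure DetAuto (α : Type) : Type 1 where
  State : Type
  [fin : Fintype State]
  init : State
  step : State → α → State

attribute [instance] DetAuto.fin

namespace DetAuto

variable {α : Type}

/-- The state reached from `q` after reading the finite word `w`. -/
def run (A : DetAuto α) (q : A.State) (w : List α) : A.State := w.foldl A.step q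

/-- The state reached from the initial state after reading `w`. -/
def eval (A : DetAuto α) (w : List α) : A.State := A.run A.init w

/-- The (infinite) run of `A` on an infinite word `w`. -/
def runSeq (A : DetAuto α) (w : ℕ → α) : ℕ → A.State
  | 0 => A.init
  | n + 1 => A.step (A.runSeq w n) (w n)

lemma exists_rep (A : DetAuto α) (u v : List α) :
    ∃ i, ∃ j, 1 ≤ j ∧ A.eval (u ++ wpow v i) = A.eval (u ++ wpow v (i + j)) := by
  obtain ⟨a, b, hab, hfab⟩ :=
    Finite.exists_ne_map_eq_of_infinite (fun n : ℕ => A.eval (u ++ wpow v n))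
  rcases lt_or_gt_of_ne hab with h | h
  · exact ⟨a, b - a, by omega, by rw [Nat.add_sub_cancel' h.le]; exact hfab⟩
  · exact ⟨b, a - b, by omega, by rw [Nat.add_sub_cancel' h.le]; exact hfab.symm⟩

/-- The least `i` in the normalization of `(u,v)` w.r.t. `A`. -/
noncomputable def normI (A : DetAuto α) (u v : List α) : ℕ :=
  Nat.find (A.exists_rep u v)

lemma normI_spec (A : DetAuto α) (u v : List α) :
    ∃ j, 1 ≤ j ∧ A.eval (u ++ wpow v (A.normI u v))
      = A.eval (u ++ wpow v (A.normI u v + j)) :=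
  Nat.find_spec (A.exists_rep u v)

/-- The least `j` in the normalization of `(u,v)` w.r.t. `A`. -/
noncomputable def normJ (A : DetAuto α) (u v : List α) : ℕ :=
  Nat.find (A.normI_spec u v)

/-- The normalization `(x, y) = (u·v^i, v^j)` of `(u,v)` w.r.t. `A`. -/
noncomputable def normalize (A : DetAuto α) (u v : List α) : List α × List α :=
  (u ++ wpow v (A.normI u v), wpow v (A.normJ u v))

/-- The product automaton. -/
def prod (A B : DetAuto α) : DetAuto α where
  State := A.State × B.State
  init := (A.init, B.init)
  step := fun p σ => (A.step p.1 σ, B.step p.2 σ)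

end DetAuto

/-- A family of DFAs: a leading automaton and a progress DFA for each of its states. -/
structure FDFA (α : Type) : Type 1 where
  leading : DetAuto α
  pState : leading.State → Type
  [pFin : ∀ q, Fintype (pState q)]
  pInit : ∀ q, pState q
  pStep : ∀ q, pState q → α → pState q
  pAcc : ∀ q, Set (pState q)

attribute [instance] FDFA.pFin

namespace FDFA

variable {α : Type}

/-- The progress DFA at state `q` accepts the finite word `y`. -/
def progAccept (F : FDFA α) (q : F.leading.State) (y : List α) : Prop :=
  y.foldl (F.pStep q) (F.pInit q) ∈ F.pAcc q

/-- `F` accepts the pair `(u, v)`: with `(x,y)` the normalization of `(u,v)` w.r.t.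
the leading automaton, the progress DFA at the state reached on `x` accepts `y`. -/
noncomputable def Accept (F : FDFA α) (u v : List α) : Prop :=
  F.progAccept (F.leading.eval (F.leading.normalize u v).1) (F.leading.normalize u v).2

/-- `F` is saturated: acceptance of `(u,v)` depends only on the infinite word `u·v^ω`. -/
def Saturated [Inhabited α] (F : FDFA α) : Prop :=
  ∀ u v u' v' : List α, v ≠ [] → v' ≠ [] → upWord u v = upWord u' v' →
    (F.Accept u v ↔ F.Accept u' v')

/-- The complement FDFA: same structure, complemented accepting states. -/
def compl (F : FDFA α) : FDFA α :=
  { F with pAcc := fun q => (F.pAcc q)ᶜ }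

end FDFA

/-! The normalization `(x, y)` satisfies `Q(x·y) = Q(x)`, so every power of `y` loops at
`Q(x)`. As words, `x·y^i·y'·(y''·y')^j = x·y^(i+j)·y'`, hence reading `(y''·y')^j` from
`Q(x·y^i·y')` returns to that state. A pair `(z, w)` with `Q(z·w) = Q(z)` is normalized,
its least exponents being `0` and `1`. -/

section wpow

variable {α : Type}

theorem wpow_add (v : List α) (m n : ℕ) : wpow v (m + n) = wpow v m ++ wpow v n := by
  induction n with
  | zero => simp [wpow]
  | succ n ih => rw [← Nat.add_assoc, wpow, ih, wpow, List.append_assoc]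

theorem append_wpow_append_comm (l m : List α) (n : ℕ) :
    l ++ wpow (m ++ l) n = wpow (l ++ m) n ++ l := by
  induction n with
  | zero => simp [wpow]
  | succ n ih => simp only [wpow, ← List.append_assoc, ih]

end wpow

namespace DetAuto

variable {α : Type} (A : DetAuto α)

theorem eval_append (a b : List α) : A.eval (a ++ b) = A.run (A.eval a) b := by
  simp [eval, run, List.foldl_append]

theorem eval_append_normalize (u v : List α) :
    A.eval ((A.normalize u v).1 ++ (A.normalize u v).2) = A.eval (A.normalize u v).1 := by
  have hj := (Nat.find_spec (A.normI_spec u v)).2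
  rw [← normJ, wpow_add] at hj
  simp only [normalize, List.append_assoc, hj]

theorem eval_append_wpow_of_eval_append {x y : List α} (h : A.eval (x ++ y) = A.eval x)
    (k : ℕ) : A.eval (x ++ wpow y k) = A.eval x := by
  induction k with
  | zero => simp [wpow]
  | succ k ih => rw [wpow, ← List.append_assoc, eval_append, ih, ← eval_append, h]

theorem eval_append_rotate_of_eval_append {x y' y'' : List α}
    (h : A.eval (x ++ (y' ++ y'')) = A.eval x) (i k : ℕ) :
    A.eval (x ++ wpow (y' ++ y'') i ++ y' ++ wpow (y'' ++ y') k)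
      = A.eval (x ++ wpow (y' ++ y'') i ++ y') := by
  have hword : x ++ wpow (y' ++ y'') i ++ y' ++ wpow (y'' ++ y') k
      = x ++ wpow (y' ++ y'') (i + k) ++ y' := by
    simp only [List.append_assoc, append_wpow_append_comm, wpow_add]
  have hstate (n : ℕ) : A.eval (x ++ wpow (y' ++ y'') n ++ y') = A.run (A.eval x) y' := by
    rw [eval_append, eval_append_wpow_of_eval_append A h]
  rw [hword, hstate, hstate]

theorem normalize_eq_self_of_eval_append {z w : List α} (h : A.eval (z ++ w) = A.eval z) :
    A.normalize z w = (z, w) := by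
  have hI : A.normI z w = 0 :=
    Nat.find_eq_zero _ |>.mpr ⟨1, le_rfl, by simpa [wpow] using h.symm⟩
  have hJ : A.normJ z w = 1 := by
    refine le_antisymm (Nat.find_le ⟨le_rfl, ?_⟩) (Nat.find_spec (A.normI_spec z w)).1
    simpa [hI, wpow] using h.symm
  simp [normalize, hI, hJ, wpow]

end DetAuto

theorem normalization_shift_general {α : Type} (Q : DetAuto α) (u v x y : List α)
    (hxy : Q.normalize u v = (x, y)) :
    ∀ i j : ℕ, 1 ≤ j → ∀ y' y'' : List α, y = y' ++ y'' →
      Q.normalize (x ++ wpow y i ++ y') (wpow (y'' ++ y') j)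
        = (x ++ wpow y i ++ y', wpow (y'' ++ y') j) := by
  rintro i j - y' y'' rfl
  have hloop : Q.eval (x ++ (y' ++ y'')) = Q.eval x := by
    simpa [hxy] using Q.eval_append_normalize u v
  exact Q.normalize_eq_self_of_eval_append (Q.eval_append_rotate_of_eval_append hloop i j)

/-- If `(x,y)` is the normalization of `(u,v)` w.r.t. `Q`, then for every
`i ≥ 0`, `j ≥ 1` and factorization `y = y'·y''`, the pair `(x·y^i·y', (y''·y')^j)` is the
normalization of itself w.r.t. `Q`. -/
theorem normalization_shift {α : Type} (Q : DetAuto α) (u v x y : List α) (hv : v ≠ [])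
    (hxy : Q.normalize u v = (x, y)) :
    ∀ i j : ℕ, 1 ≤ j → ∀ y' y'' : List α, y = y' ++ y'' →
      Q.normalize (x ++ wpow y i ++ y') (wpow (y'' ++ y') j)
        = (x ++ wpow y i ++ y', wpow (y'' ++ y') j) :=
  normalization_shift_general Q u v x y hxy
end

section
/- For a deterministic parity automaton D with coloring κ, and a state q with δ(q, y) = q for a nonempty word y, the progress-DFA computation from (q, κ(q)) on y ends in a state (q, m) where m is the minimum color of the states visited along the cycle from q reading y (including q itself via κ(q)); moreover the run of D on x·y^ω (where D reaches q on x) is accepting iff m is odd. -/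
open Classical

/-- Parity acceptance: the minimal color visited infinitely often along the run is odd. -/
def parityAccepts {α : Type} (A : DetAuto α) (κ : A.State → ℕ) (w : ℕ → α) : Prop :=
  Odd (sInf {c | {n | κ (A.runSeq w n) = c}.Infinite})


/-!
Reading `y` from `q`, the second component of the progress DFA is a running minimum of the
colors along the path, so it ends at their minimum `m`. The run of `A` on `x·y^ω` reaches `q`
after `x` and then traverses the `q`-cycle over `y` forever, so the colors it sees infinitely
often are exactly those on the cycle, whose least element is `m`.
-/

lemma setOf_fiber_infinite_eq_image_Iio {β : Type} (s g : ℕ → β) {N L : ℕ} (hL : 0 < L)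
    (hper : ∀ k, s (N + k) = g (k % L)) :
    {c | {n | s n = c}.Infinite} = g '' Set.Iio L := by
  ext c
  constructor
  · intro hc
    obtain ⟨n, hn, hNn⟩ := hc.exists_gt N
    refine ⟨(n - N) % L, Nat.mod_lt _ hL, ?_⟩
    rw [← hper, Nat.add_sub_cancel' hNn.le]
    exact hn
  · rintro ⟨r, hr, rfl⟩
    refine Set.infinite_of_injective_forall_mem (f := fun k => N + (r + k * L)) ?_ fun k => ?_
    · intro a b hab
      exact Nat.eq_of_mul_eq_mul_right hL (by simpa using hab)
    · simp [hper, Nat.mod_eq_of_lt (Set.mem_Iio.mp hr)]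

namespace DetAuto

variable {α : Type} (A : DetAuto α) (κ : A.State → ℕ)

lemma run_append (p : A.State) (u v : List α) : A.run p (u ++ v) = A.run (A.run p u) v :=
  List.foldl_append

lemma run_take_add_one (p : A.State) (y : List α) {i : ℕ} (hi : i < y.length) :
    A.run p (y.take (i + 1)) = A.step (A.run p (y.take i)) y[i] := by
  rw [List.take_add_one, List.getElem?_eq_getElem hi, run_append]
  rfl

lemma run_take_mod_add_one {q : A.State} {y : List α} (hloop : A.run q y = q) {r : ℕ}
    (hr : r < y.length) :
    A.run q (y.take ((r + 1) % y.length)) = A.step (A.run q (y.take r)) y[r] := by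
  rw [← run_take_add_one A q y hr]
  rcases (Nat.succ_le_of_lt hr).lt_or_eq with hlt | heq
  · rw [Nat.mod_eq_of_lt hlt]
  · rw [show r + 1 = y.length from heq, Nat.mod_self, List.take_length, hloop, List.take_zero]
    rfl

lemma runSeq_of_prefOf [Inhabited α] {w : ℕ → α} {u : List α} (hu : prefOf u w) :
    A.runSeq w u.length = A.eval u := by
  induction u using List.reverseRecOn with
  | nil => rfl
  | append_singleton u a ih =>
    have hpre : prefOf u w := fun i hi => by
      rw [hu i (by simp; omega), List.getD_append _ _ _ _ hi]
    have hlast : w u.length = a := by simpa using hu u.length (by simp)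
    simp only [List.length_append, List.length_singleton, runSeq, ih hpre, hlast, eval,
      run_append]
    rfl

lemma runSeq_upWord [Inhabited α] {x y : List α} (hy : y ≠ [])
    (hloop : A.run (A.eval x) y = A.eval x) (k : ℕ) :
    A.runSeq (upWord x y) (x.length + k) = A.run (A.eval x) (y.take (k % y.length)) := by
  have hL : 0 < y.length := List.length_pos_iff.mpr hy
  induction k with
  | zero =>
    refine (A.runSeq_of_prefOf fun i hi => ?_).trans rfl
    simp [upWord, hi]
  | succ k ih =>
    have hr : k % y.length < y.length := Nat.mod_lt _ hL
    have hletter : upWord x y (x.length + k) = y[k % y.length] := by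
      simp [upWord, List.getElem?_eq_getElem hr]
    rw [← add_assoc, runSeq, ih, hletter, ← Nat.mod_add_mod, A.run_take_mod_add_one hloop hr]

def minColorStep (s : A.State × ℕ) (σ : α) : A.State × ℕ :=
  (A.step s.1 σ, min s.2 (κ (A.step s.1 σ)))

def pathMinColor (p : A.State) (y : List α) : ℕ :=
  (Finset.range (y.length + 1)).inf' Finset.nonempty_range_add_one
    (fun i => κ (A.run p (y.take i)))

lemma foldl_minColorStep (p : A.State) (y : List α) :
    y.foldl (A.minColorStep κ) (p, κ p) = (A.run p y, A.pathMinColor κ p y) := by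
  induction y using List.reverseRecOn with
  | nil => simp [pathMinColor, run]
  | append_singleton y a ih =>
    have hprefix : ∀ i ∈ Finset.range (y.length + 1), κ (A.run p ((y ++ [a]).take i))
        = κ (A.run p (y.take i)) := fun i hi => by
      rw [List.take_append_of_le_length (Finset.mem_range_succ_iff.mp hi)]
    rw [List.foldl_append, ih]
    simp only [pathMinColor, List.length_append, List.length_singleton,
      Finset.range_add_one (n := y.length + 1)]
    rw [Finset.inf'_insert Finset.nonempty_range_add_one, List.take_of_length_le (by simp),
      Finset.inf'_congr _ rfl hprefix, run_append, min_comm]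
    rfl

lemma sInf_image_Iio_eq_pathMinColor {q : A.State} {y : List α} (hy : y ≠ [])
    (hloop : A.run q y = q) :
    sInf ((fun i => κ (A.run q (y.take i))) '' Set.Iio y.length) = A.pathMinColor κ q y := by
  have hL : 0 < y.length := List.length_pos_iff.mpr hy
  rw [pathMinColor, Finset.inf'_eq_csInf_image, Finset.coe_range]
  -- the endpoint `y.length` of the cycle is `q` again, so it adds no new color
  refine congrArg sInf (subset_antisymm (Set.image_mono (Set.Iio_subset_Iio y.length.le_succ)) ?_)
  rintro _ ⟨i, hi, rfl⟩
  rcases (Nat.lt_succ_iff.mp hi).lt_or_eq with hlt | rfl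
  · exact ⟨i, hlt, rfl⟩
  · exact ⟨0, hL, by simp only [List.take_zero, List.take_length, hloop]; rfl⟩

end DetAuto

/-- If `δ(q,y) = q` (nonempty `y`) and `A(x) = q`, then the min-color
tracking (progress-DFA) computation from `(q, κ q)` on `y` ends at `(q, m)`, where `m`
is the minimum color on the `q`-cycle over `y` (including `q`); moreover the run of `A`
on `x·y^ω` is parity-accepting iff `m` is odd. -/
theorem progress_cycle_min_color {α : Type} [Inhabited α] (A : DetAuto α)
    (κ : A.State → ℕ) (q : A.State) (x y : List α) (hy : y ≠ [])
    (hx : A.eval x = q) (hloop : A.run q y = q) :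
    y.foldl (fun p σ => (A.step p.1 σ, min p.2 (κ (A.step p.1 σ)))) (q, κ q)
      = (q, (Finset.range (y.length + 1)).inf'
          ⟨0, Finset.mem_range.mpr (Nat.succ_pos _)⟩
          (fun i => κ (A.run q (y.take i)))) ∧
    (parityAccepts A κ (upWord x y) ↔
      Odd ((Finset.range (y.length + 1)).inf'
        ⟨0, Finset.mem_range.mpr (Nat.succ_pos _)⟩
        (fun i => κ (A.run q (y.take i))))) := by
  subst hx
  have hcolors := setOf_fiber_infinite_eq_image_Iio (fun n => κ (A.runSeq (upWord x y) n))
    (fun i => κ (A.run (A.eval x) (y.take i))) (List.length_pos_iff.mpr hy)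
    fun k => congrArg κ (A.runSeq_upWord hy hloop k)
  constructor
  · exact (A.foldl_minColorStep κ (A.eval x) y).trans (by rw [hloop]; rfl)
  · rw [parityAccepts, hcolors, A.sInf_image_Iio_eq_pathMinColor κ hy hloop]
    rfl
end
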